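/- Let P and N be smooth matrix-valued maps on ℝⁿ such that P(x) is skew-symmetric and N(x)P(x) is skew-symmetric for every x, and suppose the Nijenhuis torsion of N vanishes identically. Then for every k ≥ 1, every index l, and every point: Σ_{i,j} (N^{k−1})^l_i P^{ij} ∂_j (Tr N) = (1/k) Σ_j P^{lj} ∂_j ( Tr(N^k) ). That is, N^{k−1} H^P_{Tr N} = H^P_{Tr(N^k)/k}, so the Damianou–Fernandes hierarchy X_k = N^{k−1} X_1 coincides with the hierarchy X^{(k)} = −(1/2) H^P_{I_k}. -/

import Mathlib

open Matrix BigOperators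

/-- Partial derivative in the `l`-th coordinate direction. -/
noncomputable def pd {n : ℕ} (l : Fin n) (f : (Fin n → ℝ) → ℝ) (x : Fin n → ℝ) : ℝ :=
  fderiv ℝ f x (Pi.single l 1)

lemma pd_sum {n : ℕ} (l : Fin n) {ι : Type*} (s : Finset ι) (f : ι → (Fin n → ℝ) → ℝ)
    (x : Fin n → ℝ) (hf : ∀ i ∈ s, DifferentiableAt ℝ (f i) x) :
    pd l (fun y => ∑ i ∈ s, f i y) x = ∑ i ∈ s, pd l (f i) x := by
  unfold pd
  rw [fderiv_fun_sum hf]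
  simp

lemma pd_mul {n : ℕ} (l : Fin n) (f g : (Fin n → ℝ) → ℝ) (x : Fin n → ℝ)
    (hf : DifferentiableAt ℝ f x) (hg : DifferentiableAt ℝ g x) :
    pd l (fun y => f y * g y) x = f x * pd l g x + g x * pd l f x := by
  unfold pd
  rw [fderiv_fun_mul hf hg]
  simp

lemma contDiff_pow_entry {n : ℕ} (N : (Fin n → ℝ) → Matrix (Fin n) (Fin n) ℝ)
    (hN : ∀ i j : Fin n, ContDiff ℝ (⊤ : ℕ∞) (fun x => N x i j)) :
    ∀ (m : ℕ) (a b : Fin n), ContDiff ℝ (⊤ : ℕ∞) (fun x => ((N x) ^ m) a b) := by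
  intro m
  induction m with
  | zero =>
      intro a b
      simp only [pow_zero]
      exact contDiff_const
  | succ m ih =>
      intro a b
      have : (fun x => ((N x) ^ (m+1)) a b) = fun x => ∑ c, ((N x) ^ m) a c * N x c b := by
        funext x; rw [pow_succ, Matrix.mul_apply]
      rw [this]
      exact ContDiff.sum fun c _ => (ih a c).mul (hN c b)

/-- Entrywise derivative matrix of `N`. -/
noncomputable def Dmat {n : ℕ} (N : (Fin n → ℝ) → Matrix (Fin n) (Fin n) ℝ)
    (l : Fin n) (x : Fin n → ℝ) : Matrix (Fin n) (Fin n) ℝ :=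
  Matrix.of fun a b => pd l (fun y => N y a b) x

lemma pd_pow_entry {n : ℕ} (N : (Fin n → ℝ) → Matrix (Fin n) (Fin n) ℝ)
    (hN : ∀ i j : Fin n, ContDiff ℝ (⊤ : ℕ∞) (fun x => N x i j)) :
    ∀ (m : ℕ) (l a b : Fin n) (x : Fin n → ℝ),
      pd l (fun y => ((N y) ^ m) a b) x
        = (∑ s ∈ Finset.range m, (N x) ^ s * Dmat N l x * (N x) ^ (m - 1 - s)) a b := by
  intro m
  induction m with
  | zero =>
      intro l a b x
      simp only [pow_zero, Finset.range_zero, Finset.sum_empty, Matrix.zero_apply]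
      unfold pd
      simp [fderiv_const]
  | succ m ih =>
      intro l a b x
      have hre : (fun y => ((N y) ^ (m+1)) a b) = fun y => ∑ c, ((N y) ^ m) a c * N y c b := by
        funext y; rw [pow_succ, Matrix.mul_apply]
      have hdm : ∀ (a b : Fin n), DifferentiableAt ℝ (fun y => ((N y) ^ m) a b) x :=
        fun a b => ((contDiff_pow_entry N hN m a b).differentiable (by simp)).differentiableAt
      have hdN : ∀ (a b : Fin n), DifferentiableAt ℝ (fun y => N y a b) x :=
        fun a b => ((hN a b).differentiable (by simp)).differentiableAt
      rw [hre, pd_sum l Finset.univ (fun c y => ((N y) ^ m) a c * N y c b) x (fun c _ => ((hdm a c).mul (hdN c b)))]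
      have hterm : ∀ c : Fin n, pd l (fun y => ((N y) ^ m) a c * N y c b) x
          = ((N x) ^ m) a c * pd l (fun y => N y c b) x
            + N x c b * pd l (fun y => ((N y) ^ m) a c) x :=
        fun c => pd_mul l _ _ x (hdm a c) (hdN c b)
      rw [Finset.sum_congr rfl (fun c _ => hterm c)]
      rw [Finset.sum_add_distrib]
      have h1 : ∑ c, ((N x) ^ m) a c * pd l (fun y => N y c b) x
          = ((N x) ^ m * Dmat N l x) a b := by
        rw [Matrix.mul_apply]; rfl
      have h2 : ∑ c, N x c b * pd l (fun y => ((N y) ^ m) a c) x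
          = ((∑ s ∈ Finset.range m, (N x) ^ s * Dmat N l x * (N x) ^ (m - 1 - s)) * N x) a b := by
        rw [Matrix.mul_apply]
        refine Finset.sum_congr rfl (fun c _ => ?_)
        rw [ih l a c x, mul_comm]
      rw [h1, h2, Finset.sum_range_succ]
      simp only [Matrix.add_apply]
      rw [add_comm]
      congr 1
      · rw [Finset.sum_mul]
        have hsum : (∑ s ∈ Finset.range m, (N x) ^ s * Dmat N l x * (N x) ^ (m - 1 - s) * N x)
            = ∑ s ∈ Finset.range m, (N x) ^ s * Dmat N l x * (N x) ^ (m + 1 - 1 - s) := by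
          refine Finset.sum_congr rfl fun s hs => ?_
          have hs' : s < m := Finset.mem_range.mp hs
          rw [mul_assoc ((N x) ^ s * Dmat N l x), ← pow_succ]
          have : m - 1 - s + 1 = m + 1 - 1 - s := by omega
          rw [this]
        rw [hsum]
      · have : m + 1 - 1 - m = 0 := by omega
        rw [this, pow_zero, mul_one]

lemma pd_trace_pow {n : ℕ} (N : (Fin n → ℝ) → Matrix (Fin n) (Fin n) ℝ)
    (hN : ∀ i j : Fin n, ContDiff ℝ (⊤ : ℕ∞) (fun x => N x i j)) (m : ℕ)
    (l : Fin n) (x : Fin n → ℝ) :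
    pd l (fun y => ∑ a, ((N y) ^ m) a a) x
      = (m : ℝ) * ∑ a, ∑ b, ((N x) ^ (m - 1)) a b * Dmat N l x b a := by
  have hdm : ∀ (a b : Fin n), DifferentiableAt ℝ (fun y => ((N y) ^ m) a b) x :=
    fun a b => ((contDiff_pow_entry N hN m a b).differentiable (by simp)).differentiableAt
  rw [pd_sum l Finset.univ _ x (fun a _ => hdm a a)]
  rw [Finset.sum_congr rfl (fun a _ => pd_pow_entry N hN m l a a x)]
  have key : ∀ s ∈ Finset.range m,
      ∑ a, ((N x) ^ s * Dmat N l x * (N x) ^ (m - 1 - s)) a a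
        = ∑ a, ∑ b, ((N x) ^ (m - 1)) a b * Dmat N l x b a := by
    intro s hs
    have hs' : s < m := Finset.mem_range.mp hs
    have e1 : ∑ a, ((N x) ^ s * Dmat N l x * (N x) ^ (m - 1 - s)) a a
        = Matrix.trace ((N x) ^ s * Dmat N l x * (N x) ^ (m - 1 - s)) := rfl
    have e2 : ∑ a, ∑ b, ((N x) ^ (m - 1)) a b * Dmat N l x b a
        = Matrix.trace ((N x) ^ (m - 1) * Dmat N l x) := by
      rw [Matrix.trace]
      refine Finset.sum_congr rfl (fun a _ => ?_)
      rw [Matrix.diag_apply, Matrix.mul_apply]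
    rw [e1, e2, Matrix.trace_mul_comm, ← mul_assoc, ← pow_add]
    have : m - 1 - s + s = m - 1 := by omega
    rw [this]
  simp only [Matrix.sum_apply]
  rw [Finset.sum_comm, Finset.sum_congr rfl key]
  rw [Finset.sum_const, Finset.card_range, nsmul_eq_mul]

lemma sum_swap3 {α : Type*} [AddCommMonoid α] {n : ℕ} (f : Fin n → Fin n → Fin n → α) :
    ∑ j, ∑ a, ∑ l, f j a l = ∑ l, ∑ j, ∑ a, f j a l := by
  have h1 : ∀ j, ∑ a, ∑ l, f j a l = ∑ l, ∑ a, f j a l := fun j => Finset.sum_comm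
  simp only [h1]
  exact Finset.sum_comm

lemma contraction {n : ℕ} (M : Matrix (Fin n) (Fin n) ℝ) (E : Fin n → Matrix (Fin n) (Fin n) ℝ)
    (h : ∀ (a i j : Fin n),
      ∑ l, (M l i * E l a j - M l j * E l a i - M a l * (E i l j - E j l i)) = 0)
    (r : ℕ) (i : Fin n) :
    ∑ l, M l i * ∑ a, ∑ b, (M ^ r) a b * E l b a
      = ∑ a, ∑ b, (M ^ (r + 1)) a b * E i b a := by
  have hc : ∑ j, ∑ a, ∑ l, ((M ^ r) j a * (M l i * E l a j) - (M ^ r) j a * (M l j * E l a i)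
      - ((M ^ r) j a * (M a l * E i l j) - (M ^ r) j a * (M a l * E j l i))) = 0 := by
    have hpt : ∀ j a : Fin n,
        ∑ l, ((M ^ r) j a * (M l i * E l a j) - (M ^ r) j a * (M l j * E l a i)
          - ((M ^ r) j a * (M a l * E i l j) - (M ^ r) j a * (M a l * E j l i)))
        = (M ^ r) j a * ∑ l, (M l i * E l a j - M l j * E l a i
            - M a l * (E i l j - E j l i)) := by
      intro j a
      rw [Finset.mul_sum]
      exact Finset.sum_congr rfl fun l _ => by ring
    simp only [hpt, h, mul_zero, Finset.sum_const_zero]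
  simp only [Finset.sum_sub_distrib] at hc
  have hT1 : (∑ l, M l i * ∑ a, ∑ b, (M ^ r) a b * E l b a)
      = ∑ j, ∑ a, ∑ l, (M ^ r) j a * (M l i * E l a j) := by
    rw [sum_swap3]
    simp only [Finset.mul_sum]
    exact Finset.sum_congr rfl fun l _ => Finset.sum_congr rfl fun a _ =>
      Finset.sum_congr rfl fun b _ => by ring
  have hT3 : (∑ j, ∑ a, ∑ l, (M ^ r) j a * (M a l * E i l j))
      = ∑ a, ∑ b, (M ^ (r + 1)) a b * E i b a := by
    rw [pow_succ]
    refine Finset.sum_congr rfl fun j _ => ?_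
    rw [Finset.sum_comm]
    refine Finset.sum_congr rfl fun b _ => ?_
    rw [Matrix.mul_apply, Finset.sum_mul]
    exact Finset.sum_congr rfl fun c _ => by ring
  have hT2 : (∑ j, ∑ a, ∑ l, (M ^ r) j a * (M l j * E l a i))
      = ∑ l, ∑ a, (M ^ (r + 1)) l a * E l a i := by
    rw [sum_swap3]
    refine Finset.sum_congr rfl fun l _ => ?_
    rw [Finset.sum_comm]
    refine Finset.sum_congr rfl fun a _ => ?_
    rw [pow_succ', Matrix.mul_apply, Finset.sum_mul]
    exact Finset.sum_congr rfl fun j _ => by ring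
  have hT4 : (∑ j, ∑ a, ∑ l, (M ^ r) j a * (M a l * E j l i))
      = ∑ l, ∑ a, (M ^ (r + 1)) l a * E l a i := by
    refine Finset.sum_congr rfl fun j _ => ?_
    rw [Finset.sum_comm]
    refine Finset.sum_congr rfl fun l _ => ?_
    rw [pow_succ, Matrix.mul_apply, Finset.sum_mul]
    exact Finset.sum_congr rfl fun a _ => by ring
  rw [hT1]
  rw [hT2, hT4] at hc
  linarith [hc, hT3]

lemma lenard {n : ℕ} (N : (Fin n → ℝ) → Matrix (Fin n) (Fin n) ℝ)
    (hN : ∀ i j : Fin n, ContDiff ℝ (⊤ : ℕ∞) (fun x => N x i j))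
    (hT : ∀ (a i j : Fin n) (x : Fin n → ℝ),
      (∑ l, (N x l i * pd l (fun y => N y a j) x
        - N x l j * pd l (fun y => N y a i) x
        - N x a l * (pd i (fun y => N y l j) x - pd j (fun y => N y l i) x))) = 0) :
    ∀ (r : ℕ) (i : Fin n) (x : Fin n → ℝ),
      ∑ j, ((N x) ^ r) j i * pd j (fun y => ∑ a, N y a a) x
        = ∑ a, ∑ b, ((N x) ^ r) a b * Dmat N i x b a := by
  intro r
  induction r with
  | zero =>
      intro i x
      have hdN : ∀ a b : Fin n, DifferentiableAt ℝ (fun y => N y a b) x :=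
        fun a b => ((hN a b).differentiable (by simp)).differentiableAt
      have hL : ∑ j, ((N x) ^ 0) j i * pd j (fun y => ∑ a, N y a a) x
          = pd i (fun y => ∑ a, N y a a) x := by
        simp [Matrix.one_apply]
      have hR : ∑ a, ∑ b, ((N x) ^ 0) a b * Dmat N i x b a = ∑ a, Dmat N i x a a := by
        simp [Matrix.one_apply]
      rw [hL, hR, pd_sum i Finset.univ _ x (fun a _ => hdN a a)]
      rfl
  | succ r ih =>
      intro i x
      have h : ∀ (a i j : Fin n),
          ∑ l, (N x l i * Dmat N l x a j - N x l j * Dmat N l x a i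
            - N x a l * (Dmat N i x l j - Dmat N j x l i)) = 0 := by
        intro a i j
        simpa [Dmat] using hT a i j x
      have key := contraction (N x) (fun l => Dmat N l x) h r i
      have h1 : ∀ j : Fin n, ((N x) ^ (r + 1)) j i * pd j (fun y => ∑ a, N y a a) x
          = ∑ l, N x l i * (((N x) ^ r) j l * pd j (fun y => ∑ a, N y a a) x) := by
        intro j
        rw [pow_succ, Matrix.mul_apply, Finset.sum_mul]
        exact Finset.sum_congr rfl fun l _ => by ring
      rw [Finset.sum_congr rfl fun j _ => h1 j, Finset.sum_comm]
      have h2 : ∀ l : Fin n, ∑ j, N x l i * (((N x) ^ r) j l * pd j (fun y => ∑ a, N y a a) x)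
          = N x l i * ∑ a, ∑ b, ((N x) ^ r) a b * Dmat N l x b a := by
        intro l
        rw [← Finset.mul_sum, ih l x]
      rw [Finset.sum_congr rfl fun l _ => h2 l]
      exact key

/-- The Nijenhuis torsion of a (1,1)-tensor field `N`, in coordinates. -/
noncomputable def nijenhuisTorsion {n : ℕ}
    (N : (Fin n → ℝ) → Matrix (Fin n) (Fin n) ℝ)
    (k i j : Fin n) (x : Fin n → ℝ) : ℝ :=
  ∑ l, (N x l i * pd l (fun y => N y k j) x
      - N x l j * pd l (fun y => N y k i) x
      - N x k l * (pd i (fun y => N y l j) x - pd j (fun y => N y l i) x))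

theorem hierarchies_coincide
    {n : ℕ} (hn : 1 ≤ n)
    (P N : (Fin n → ℝ) → Matrix (Fin n) (Fin n) ℝ)
    (hP : ∀ i j : Fin n, ContDiff ℝ (⊤ : ℕ∞) (fun x => P x i j))
    (hN : ∀ i j : Fin n, ContDiff ℝ (⊤ : ℕ∞) (fun x => N x i j))
    (hskewP : ∀ x, (P x)ᵀ = -(P x))
    (hskewNP : ∀ x, (N x * P x)ᵀ = -(N x * P x))
    (hT : ∀ (a i j : Fin n) (x : Fin n → ℝ), nijenhuisTorsion N a i j x = 0) :
    ∀ (k : ℕ), 1 ≤ k → ∀ (l : Fin n) (x : Fin n → ℝ),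
      ∑ i, ∑ j, ((N x) ^ (k - 1)) l i * P x i j * pd j (fun y => ∑ a, N y a a) x
        = (1 / (k : ℝ)) * ∑ j, P x l j * pd j (fun y => ∑ a, ((N y) ^ k) a a) x := by
  have hT' : ∀ (a i j : Fin n) (x : Fin n → ℝ),
      (∑ l, (N x l i * pd l (fun y => N y a j) x
        - N x l j * pd l (fun y => N y a i) x
        - N x a l * (pd i (fun y => N y l j) x - pd j (fun y => N y l i) x))) = 0 := by
    intro a i j x
    simpa [nijenhuisTorsion] using hT a i j x
  have hNP : ∀ x, N x * P x = P x * (N x)ᵀ := by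
    intro x
    have h1 := hskewNP x
    rw [Matrix.transpose_mul, hskewP x, Matrix.neg_mul] at h1
    exact (neg_inj.mp h1).symm
  intro k hk l x
  have hk0 : (k : ℝ) ≠ 0 := Nat.cast_ne_zero.mpr (by omega)
  have hNPcomm : ∀ (r : ℕ), (N x) ^ r * P x = P x * ((N x) ^ r)ᵀ := by
    intro r
    induction r with
    | zero => simp
    | succ r ih =>
        rw [pow_succ', mul_assoc, ih, ← mul_assoc, hNP x, mul_assoc,
          ← Matrix.transpose_mul, ← pow_succ, ← pow_succ']
  have hrhs : ∀ j : Fin n, pd j (fun y => ∑ a, ((N y) ^ k) a a) x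
      = (k : ℝ) * ∑ i, ((N x) ^ (k - 1)) i j * pd i (fun y => ∑ a, N y a a) x := by
    intro j
    rw [pd_trace_pow N hN k j x, ← lenard N hN hT' (k - 1) j x]
  have hLHS : (∑ i, ∑ j, ((N x) ^ (k - 1)) l i * P x i j * pd j (fun y => ∑ a, N y a a) x)
      = ∑ j, ((N x) ^ (k - 1) * P x) l j * pd j (fun y => ∑ a, N y a a) x := by
    rw [Finset.sum_comm]
    refine Finset.sum_congr rfl fun j _ => ?_
    rw [Matrix.mul_apply, Finset.sum_mul]
  have step : ∀ j : Fin n, P x l j * pd j (fun y => ∑ a, ((N y) ^ k) a a) x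
      = (k : ℝ) * ∑ i, P x l j * (((N x) ^ (k - 1)) i j * pd i (fun y => ∑ a, N y a a) x) := by
    intro j
    rw [hrhs j, mul_left_comm, Finset.mul_sum]
  have hR : (1 / (k : ℝ)) * ∑ j, P x l j * pd j (fun y => ∑ a, ((N y) ^ k) a a) x
      = ∑ i, (P x * (((N x) ^ (k - 1))ᵀ)) l i * pd i (fun y => ∑ a, N y a a) x := by
    rw [Finset.sum_congr rfl fun j _ => step j, ← Finset.mul_sum, ← mul_assoc,
      one_div, inv_mul_cancel₀ hk0, one_mul, Finset.sum_comm]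
    refine Finset.sum_congr rfl fun i _ => ?_
    rw [Matrix.mul_apply, Finset.sum_mul]
    exact Finset.sum_congr rfl fun j _ => by rw [Matrix.transpose_apply]; ring
  rw [hLHS, hR, hNPcomm (k - 1)]
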